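/- arXiv:1205.0478 — 2 statements merged into one kernel-verified Lean document; each statement's English description precedes it below -/
import Mathlib

section
/- Let $S=K[x_1,\dots,x_n,y_1,\dots,y_m]$ and $L=\sum_{i=1}^s I_{q_i}J_{r_i}$ a mixed product ideal with $0\le q_1<\dots<q_s\le n$, $0\le r_s<\dots<r_1\le m$. Then $L = \mathcal{P}_x \cap \mathcal{P}_{xy} \cap \mathcal{P}_y$, where $\mathcal{P}_x$ is the intersection of all primes generated by $n-q_1+1$ of the $x$-variables, $\mathcal{P}_y$ is the intersection of all primes generated by $m-r_s+1$ of the $y$-variables, and $\mathcal{P}_{xy} = \bigcap_{i=1}^{s-1}\bigcap_{X,Y} ((X)+(Y))$ where $X$ ranges over subsets of the $x$-variables of size $n-q_{i+1}+1$ and $Y$ over subsets of the $y$-variables of size $m-r_i+1$. -/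
open MvPolynomial

/-- The squarefree Veronese ideal of degree `q` in the `x`-variables of
`K[x_1,…,x_n,y_1,…,y_m]` (`I_0 = S`, `I_q = (0)` for `q > n`). -/
noncomputable def mixedI (n m : ℕ) (K : Type*) [Field K] (q : ℕ) :
    Ideal (MvPolynomial (Fin n ⊕ Fin m) K) :=
  Ideal.span {p | ∃ A : Finset (Fin n), A.card = q ∧ p = ∏ i ∈ A, X (Sum.inl i)}

/-- The squarefree Veronese ideal of degree `r` in the `y`-variables. -/
noncomputable def mixedJ (n m : ℕ) (K : Type*) [Field K] (r : ℕ) :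
    Ideal (MvPolynomial (Fin n ⊕ Fin m) K) :=
  Ideal.span {p | ∃ B : Finset (Fin m), B.card = r ∧ p = ∏ j ∈ B, X (Sum.inr j)}

/-- The prime ideal generated by a set `A` of `x`-variables. -/
noncomputable def primeX (n m : ℕ) (K : Type*) [Field K] (A : Finset (Fin n)) :
    Ideal (MvPolynomial (Fin n ⊕ Fin m) K) :=
  Ideal.span {p | ∃ i ∈ A, p = X (Sum.inl i)}

/-- The prime ideal generated by a set `B` of `y`-variables. -/
noncomputable def primeY (n m : ℕ) (K : Type*) [Field K] (B : Finset (Fin m)) :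
    Ideal (MvPolynomial (Fin n ⊕ Fin m) K) :=
  Ideal.span {p | ∃ j ∈ B, p = X (Sum.inr j)}

/-!
Every ideal involved is a squarefree monomial ideal, so a polynomial lies in it iff every
monomial of its support does, and whether `x^d` does depends only on the numbers `a` and `b` of
`x`- and `y`-variables occurring in `x^d`. Now `x^d ∈ L` iff `q_i ≤ a` and `r_i ≤ b` for some `i`,
while `x^d` lies in every prime generated by `n - q + 1` of the `x`-variables iff `q ≤ a`: such a
set of variables can avoid the support of `d` exactly when fewer than `q` of them occur. Because
`q` increases and `r` decreases, `∃ i, q_i ≤ a ∧ r_i ≤ b` is equivalent to the staircase of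
conditions `q_1 ≤ a`, `q_{i+1} ≤ a ∨ r_i ≤ b` for `1 ≤ i < s`, and `r_s ≤ b`, which are exactly the
membership conditions of the three intersections.
-/

open Finset Function

theorem forall_card_eq_exists_mem_iff_le_card {α : Type*} [Fintype α] {S : Finset α} {n k : ℕ}
    (hn : Fintype.card α = n) (hk : k ≤ n) :
    (∀ A : Finset α, #A = n - k + 1 → ∃ a ∈ A, a ∈ S) ↔ k ≤ #S := by
  classical
  subst hn
  constructor
  · intro h
    by_contra! hS
    obtain ⟨A, hAS, hA⟩ := le_card_iff_exists_subset_card.1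
      (show Fintype.card α - k + 1 ≤ #Sᶜ by rw [card_compl]; omega)
    obtain ⟨a, haA, haS⟩ := h A hA
    exact mem_compl.1 (hAS haA) haS
  · intro hS A hA
    by_contra! hAS
    have := card_union_of_disjoint (disjoint_left.2 hAS) ▸ card_le_univ (A ∪ S)
    omega

theorem exists_le_and_le_iff_of_monotoneOn {α β : Type*} [Preorder α] [Preorder β] {s : ℕ}
    {q : ℕ → α} {r : ℕ → β} (hs : 0 < s) (hq : MonotoneOn q (Set.Iio s))
    (hr : AntitoneOn r (Set.Iio s)) (a : α) (b : β) :
    (∃ i < s, q i ≤ a ∧ r i ≤ b) ↔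
      q 0 ≤ a ∧ (∀ i < s - 1, q (i + 1) ≤ a ∨ r i ≤ b) ∧ r (s - 1) ≤ b := by
  constructor
  · rintro ⟨i, hi, hqi, hri⟩
    refine ⟨(hq (Set.mem_Iio.2 hs) hi i.zero_le).trans hqi, fun j hj => ?_,
      (hr hi (Set.mem_Iio.2 (by omega)) (by omega)).trans hri⟩
    rcases le_or_gt (j + 1) i with hji | hij
    · exact .inl ((hq (Set.mem_Iio.2 (by omega)) hi hji).trans hqi)
    · exact .inr ((hr hi (Set.mem_Iio.2 (by omega)) (by omega)).trans hri)
  · rintro ⟨h0, hstep, hlast⟩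
    by_contra! hne
    have hqa : ∀ i < s, q i ≤ a := by
      intro i
      induction i with
      | zero => exact fun _ => h0
      | succ i ih =>
        exact fun hi => (hstep i (by omega)).resolve_right (hne i (by omega) (ih (by omega)))
    exact hne (s - 1) (by omega) (hqa _ (by omega)) hlast

theorem Finsupp.sum_single_one_le_iff {σ : Type*} {C : Finset σ} {d : σ →₀ ℕ} :
    ∑ k ∈ C, Finsupp.single k 1 ≤ d ↔ C ⊆ d.support := by
  classical
  simp only [Finsupp.le_def, Finsupp.finsetSum_apply, Finsupp.single_apply, Finset.sum_ite_eq',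
    subset_iff, Finsupp.mem_support_iff]
  constructor
  · intro h k hk
    simpa [hk, Nat.one_le_iff_ne_zero] using h k
  · intro h k
    split_ifs with hk
    · exact Nat.one_le_iff_ne_zero.2 (h hk)
    · exact Nat.zero_le _

theorem Finset.map_inl_subset_iff {α β : Type*} {A : Finset α} {u : Finset (α ⊕ β)} :
    A.map Embedding.inl ⊆ u ↔ A ⊆ u.toLeft := by
  simp [subset_iff]

theorem Finset.map_inr_subset_iff {α β : Type*} {B : Finset β} {u : Finset (α ⊕ β)} :
    B.map Embedding.inr ⊆ u ↔ B ⊆ u.toRight := by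
  simp [subset_iff]

namespace MvPolynomial

variable {σ R : Type*} [CommSemiring R]

theorem prod_X_eq_monomial (C : Finset σ) :
    ∏ k ∈ C, (X k : MvPolynomial σ R) = monomial (∑ k ∈ C, Finsupp.single k 1) 1 := by
  simp only [X, monomial_sum_one]

theorem mem_ideal_span_prod_X_image {𝒞 : Set (Finset σ)} {p : MvPolynomial σ R} :
    p ∈ Ideal.span ((fun C => ∏ k ∈ C, X k) '' 𝒞) ↔ ∀ d ∈ p.support, ∃ C ∈ 𝒞, C ⊆ d.support := by
  simp only [prod_X_eq_monomial]
  rw [← Set.image_image (fun e => monomial e (1 : R)), mem_ideal_span_monomial_image]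
  simp only [Set.exists_mem_image, Finsupp.sum_single_one_le_iff]

end MvPolynomial

section MixedIdeals

variable {n m : ℕ} {K : Type*} [Field K] {p : MvPolynomial (Fin n ⊕ Fin m) K}

theorem mixedI_eq_span (k : ℕ) :
    mixedI n m K k =
      Ideal.span ((fun C => ∏ c ∈ C, X c) '' (map Embedding.inl '' {A | #A = k})) := by
  rw [mixedI, Set.image_image]; congr 1; ext f; simp [eq_comm]

theorem mixedJ_eq_span (l : ℕ) :
    mixedJ n m K l =
      Ideal.span ((fun C => ∏ c ∈ C, X c) '' (map Embedding.inr '' {B | #B = l})) := by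
  rw [mixedJ, Set.image_image]; congr 1; ext f; simp [eq_comm]

theorem mixedI_mul_mixedJ_eq_span (k l : ℕ) :
    mixedI n m K k * mixedJ n m K l =
      Ideal.span ((fun C => ∏ c ∈ C, X c) '' Set.image2 disjSum {A | #A = k} {B | #B = l}) := by
  rw [mixedI_eq_span, mixedJ_eq_span, Ideal.span_mul_span', ← Set.image2_mul,
    Set.image2_image_left, Set.image2_image_right, Set.image2_image_left, Set.image2_image_right,
    Set.image_image2]
  simp [prod_disjSum]

theorem sum_mixedI_mul_mixedJ_eq_span {ι : Type*} (t : Finset ι) (q r : ι → ℕ) :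
    ∑ i ∈ t, mixedI n m K (q i) * mixedJ n m K (r i) =
      Ideal.span ((fun C => ∏ c ∈ C, X c) ''
        ⋃ i ∈ t, Set.image2 disjSum {A | #A = q i} {B | #B = r i}) := by
  simp only [mixedI_mul_mixedJ_eq_span, Ideal.sum_eq_sup, Finset.sup_eq_iSup, Set.image_iUnion₂]
  exact (Submodule.span_iUnion₂ _).symm

theorem mem_mixedI {k : ℕ} : p ∈ mixedI n m K k ↔ ∀ d ∈ p.support, k ≤ #d.support.toLeft := by
  rw [mixedI_eq_span, mem_ideal_span_prod_X_image]
  refine forall₂_congr fun d _ => ?_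
  simp only [Set.exists_mem_image, Set.mem_ofPred_eq, map_inl_subset_iff,
    le_card_iff_exists_subset_card]
  exact exists_congr fun _ => and_comm

theorem mem_mixedJ {l : ℕ} : p ∈ mixedJ n m K l ↔ ∀ d ∈ p.support, l ≤ #d.support.toRight := by
  rw [mixedJ_eq_span, mem_ideal_span_prod_X_image]
  refine forall₂_congr fun d _ => ?_
  simp only [Set.exists_mem_image, Set.mem_ofPred_eq, map_inr_subset_iff,
    le_card_iff_exists_subset_card]
  exact exists_congr fun _ => and_comm

theorem mem_mixedI_sup_mixedJ {k l : ℕ} :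
    p ∈ mixedI n m K k ⊔ mixedJ n m K l ↔
      ∀ d ∈ p.support, k ≤ #d.support.toLeft ∨ l ≤ #d.support.toRight := by
  rw [mixedI_eq_span, mixedJ_eq_span, ← Ideal.span_union, ← Set.image_union,
    mem_ideal_span_prod_X_image]
  refine forall₂_congr fun d _ => ?_
  simp only [Set.mem_union, or_and_right, exists_or, Set.exists_mem_image, Set.mem_ofPred_eq,
    map_inl_subset_iff, map_inr_subset_iff, le_card_iff_exists_subset_card]
  exact or_congr (exists_congr fun _ => and_comm) (exists_congr fun _ => and_comm)

theorem mem_sum_mixedI_mul_mixedJ {ι : Type*} {t : Finset ι} {q r : ι → ℕ} :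
    p ∈ ∑ i ∈ t, mixedI n m K (q i) * mixedJ n m K (r i) ↔
      ∀ d ∈ p.support, ∃ i ∈ t, q i ≤ #d.support.toLeft ∧ r i ≤ #d.support.toRight := by
  rw [sum_mixedI_mul_mixedJ_eq_span, mem_ideal_span_prod_X_image]
  refine forall₂_congr fun d _ => ?_
  simp only [Set.mem_iUnion, Set.mem_image2, Set.mem_ofPred_eq, le_card_iff_exists_subset_card]
  constructor
  · rintro ⟨_, ⟨i, hi, A, hA, B, hB, rfl⟩, hAB⟩
    rw [disjSum_subset] at hAB
    exact ⟨i, hi, ⟨A, hAB.1, hA⟩, B, hAB.2, hB⟩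
  · rintro ⟨i, hi, ⟨A, hAd, hA⟩, B, hBd, hB⟩
    exact ⟨_, ⟨i, hi, A, hA, B, hB, rfl⟩, disjSum_subset.2 ⟨hAd, hBd⟩⟩

theorem primeX_eq_span (A : Finset (Fin n)) :
    primeX n m K A = Ideal.span (X '' (Sum.inl '' A)) := by
  rw [primeX, Set.image_image]; congr 1; ext f; simp [eq_comm]

theorem primeY_eq_span (B : Finset (Fin m)) :
    primeY n m K B = Ideal.span (X '' (Sum.inr '' B)) := by
  rw [primeY, Set.image_image]; congr 1; ext f; simp [eq_comm]

theorem mem_primeX {A : Finset (Fin n)} :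
    p ∈ primeX n m K A ↔ ∀ d ∈ p.support, ∃ i ∈ A, i ∈ d.support.toLeft := by
  simp [primeX_eq_span, mem_ideal_span_X_image]

theorem mem_primeY {B : Finset (Fin m)} :
    p ∈ primeY n m K B ↔ ∀ d ∈ p.support, ∃ j ∈ B, j ∈ d.support.toRight := by
  simp [primeY_eq_span, mem_ideal_span_X_image]

theorem mem_primeX_sup_primeY {A : Finset (Fin n)} {B : Finset (Fin m)} :
    p ∈ primeX n m K A ⊔ primeY n m K B ↔
      ∀ d ∈ p.support, (∃ i ∈ A, i ∈ d.support.toLeft) ∨ ∃ j ∈ B, j ∈ d.support.toRight := by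
  simp [primeX_eq_span, primeY_eq_span, ← Ideal.span_union, ← Set.image_union,
    mem_ideal_span_X_image, or_and_right, exists_or]

theorem iInf_primeX_eq_mixedI {k : ℕ} (hk : k ≤ n) :
    ⨅ (A : Finset (Fin n)) (_ : #A = n - k + 1), primeX n m K A = mixedI n m K k := by
  ext p
  simp only [Submodule.mem_iInf, mem_primeX, mem_mixedI,
    ← forall_card_eq_exists_mem_iff_le_card (Fintype.card_fin n) hk]
  exact ⟨fun h d hd A hA => h A hA d hd, fun h A hA d hd => h d hd A hA⟩

theorem iInf_primeY_eq_mixedJ {l : ℕ} (hl : l ≤ m) :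
    ⨅ (B : Finset (Fin m)) (_ : #B = m - l + 1), primeY n m K B = mixedJ n m K l := by
  ext p
  simp only [Submodule.mem_iInf, mem_primeY, mem_mixedJ,
    ← forall_card_eq_exists_mem_iff_le_card (Fintype.card_fin m) hl]
  exact ⟨fun h d hd B hB => h B hB d hd, fun h B hB d hd => h d hd B hB⟩

theorem iInf_primeX_sup_primeY_eq_mixedI_sup_mixedJ {k l : ℕ} (hk : k ≤ n) (hl : l ≤ m) :
    ⨅ (A : Finset (Fin n)) (_ : #A = n - k + 1) (B : Finset (Fin m)) (_ : #B = m - l + 1),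
      primeX n m K A ⊔ primeY n m K B = mixedI n m K k ⊔ mixedJ n m K l := by
  have hmeet (S : Finset (Fin n)) (T : Finset (Fin m)) :
      (∀ A : Finset (Fin n), #A = n - k + 1 → ∀ B : Finset (Fin m), #B = m - l + 1 →
        (∃ i ∈ A, i ∈ S) ∨ ∃ j ∈ B, j ∈ T) ↔ k ≤ #S ∨ l ≤ #T := by
    rw [← forall_card_eq_exists_mem_iff_le_card (Fintype.card_fin n) hk,
      ← forall_card_eq_exists_mem_iff_le_card (Fintype.card_fin m) hl]
    constructor
    · intro h
      by_contra! ⟨⟨A, hA, hAS⟩, B, hB, hBT⟩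
      obtain ⟨i, hiA, hiS⟩ | ⟨j, hjB, hjT⟩ := h A hA B hB
      exacts [hAS i hiA hiS, hBT j hjB hjT]
    · rintro (h | h) A hA B hB
      exacts [.inl (h A hA), .inr (h B hB)]
  ext p
  simp only [Submodule.mem_iInf, mem_primeX_sup_primeY, mem_mixedI_sup_mixedJ, ← hmeet]
  exact ⟨fun h d hd A hA B hB => h A hA B hB d hd, fun h A hA B hB d hd => h d hd A hA B hB⟩

end MixedIdeals

theorem sum_mixedI_mul_mixedJ_eq_inf {n m : ℕ} {K : Type*} [Field K] {s : ℕ} {q r : ℕ → ℕ}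
    (hs : 0 < s) (hq : MonotoneOn q (Set.Iio s)) (hr : AntitoneOn r (Set.Iio s)) :
    ∑ i ∈ range s, mixedI n m K (q i) * mixedJ n m K (r i) =
      mixedI n m K (q 0) ⊓
        (⨅ (i : ℕ) (_ : i < s - 1), mixedI n m K (q (i + 1)) ⊔ mixedJ n m K (r i)) ⊓
        mixedJ n m K (r (s - 1)) := by
  ext p
  simp only [mem_sum_mixedI_mul_mixedJ, mem_range, exists_le_and_le_iff_of_monotoneOn hs hq hr,
    Submodule.mem_inf, Submodule.mem_iInf, mem_mixedI, mem_mixedJ, mem_mixedI_sup_mixedJ]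
  constructor
  · intro h
    exact ⟨⟨fun d hd => (h d hd).1, fun i hi d hd => (h d hd).2.1 i hi⟩, fun d hd => (h d hd).2.2⟩
  · rintro ⟨⟨h0, hmid⟩, hlast⟩ d hd
    exact ⟨h0 d hd, fun i hi => hmid i hi d hd, hlast d hd⟩

/-- The paper's indices `1, …, s` are `0, …, s - 1` here. -/
theorem mixed_product_primary_decomposition_general (n m : ℕ) (K : Type*) [Field K]
    (s : ℕ) (hs : 1 ≤ s) (q r : ℕ → ℕ)
    (hq : ∀ i j, i < j → j < s → q i < q j)
    (hr : ∀ i j, i < j → j < s → r j < r i)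
    (hqn : q (s - 1) ≤ n) (hrm : r 0 ≤ m) :
    (∑ i ∈ Finset.range s, mixedI n m K (q i) * mixedJ n m K (r i)) =
      (⨅ (A : Finset (Fin n)) (_ : A.card = n - q 0 + 1), primeX n m K A) ⊓
      (⨅ (i : ℕ) (_ : i < s - 1) (A : Finset (Fin n)) (_ : A.card = n - q (i + 1) + 1)
          (B : Finset (Fin m)) (_ : B.card = m - r i + 1),
            primeX n m K A ⊔ primeY n m K B) ⊓
      (⨅ (B : Finset (Fin m)) (_ : B.card = m - r (s - 1) + 1), primeY n m K B) := by
  have hq_mono : MonotoneOn q (Set.Iio s) :=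
    StrictMonoOn.monotoneOn fun i _ j hj hij => hq i j hij hj
  have hr_anti : AntitoneOn r (Set.Iio s) :=
    StrictAntiOn.antitoneOn fun i _ j hj hij => hr i j hij hj
  have hqn' : ∀ i < s, q i ≤ n := fun i hi =>
    (hq_mono hi (Set.mem_Iio.2 (by omega)) (by omega)).trans hqn
  have hrm' : ∀ i < s, r i ≤ m := fun i hi => (hr_anti (Set.mem_Iio.2 hs) hi i.zero_le).trans hrm
  rw [iInf_primeX_eq_mixedI (hqn' 0 hs), iInf_primeY_eq_mixedJ (hrm' (s - 1) (by omega)),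
    sum_mixedI_mul_mixedJ_eq_inf hs hq_mono hr_anti]
  congr 2
  exact (iInf_congr fun i => iInf_congr fun hi => iInf_primeX_sup_primeY_eq_mixedI_sup_mixedJ
    (hqn' (i + 1) (by omega)) (hrm' i (by omega))).symm

/-- (Corollary 3.3: primary decomposition of a mixed product ideal.)
`∑ I_{q_i} J_{r_i} = 𝒫_x ⊓ 𝒫_{xy} ⊓ 𝒫_y`, where `𝒫_x` is the intersection of
all primes generated by `n - q_1 + 1` of the `x`-variables, `𝒫_y` the
intersection of all primes generated by `m - r_s + 1` of the `y`-variables,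
and `𝒫_{xy} = ⋂_{i=1}^{s-1} ⋂_{X,Y} ((X) + (Y))` with `|X| = n - q_{i+1} + 1`,
`|Y| = m - r_i + 1`.  (Indices are shifted so that `i = 0,…,s-1`.) -/
theorem mixed_product_primary_decomposition (n m : ℕ) (K : Type*) [Field K]
    (s : ℕ) (hs : 1 ≤ s) (q r : ℕ → ℕ)
    (hq : ∀ i j, i < j → j < s → q i < q j)
    (hr : ∀ i j, i < j → j < s → r j < r i)
    (hqn : q (s - 1) ≤ n) (hrm : r 0 ≤ m)
    (hproper : (∑ i ∈ Finset.range s, mixedI n m K (q i) * mixedJ n m K (r i)) ≠ ⊤) :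
    (∑ i ∈ Finset.range s, mixedI n m K (q i) * mixedJ n m K (r i)) =
      (⨅ (A : Finset (Fin n)) (_ : A.card = n - q 0 + 1), primeX n m K A) ⊓
      (⨅ (i : ℕ) (_ : i < s - 1) (A : Finset (Fin n)) (_ : A.card = n - q (i + 1) + 1)
          (B : Finset (Fin m)) (_ : B.card = m - r i + 1),
            primeX n m K A ⊔ primeY n m K B) ⊓
      (⨅ (B : Finset (Fin m)) (_ : B.card = m - r (s - 1) + 1), primeY n m K B) :=
  mixed_product_primary_decomposition_general n m K s hs q r hq hr hqn hrm
end

section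
/- Let $\Delta$ be the simplicial complex on $\{x_1,\dots,x_n\}\cup\{y_1,\dots,y_m\}$ whose facets are $\bigcup_{k=1}^{s'}\mathcal{F}_k$ with $\mathcal{F}_k$ the family of subsets with exactly $q(k)$ $x$-vertices and $r(k)$ $y$-vertices, $q(1)<\dots<q(s')$, $r(1)>\dots>r(s')$, and set $\sigma(i)=q(i)+r(i)$. Suppose that for every $0\le l\le \dim\Delta+1$ the pure skeleton-complex $\Delta^{[l-1]}$ (generated by the faces of $\Delta$ of dimension exactly $l-1$) is strongly connected. Then for all $i\in\{1,\dots,s'-1\}$, either $q(i)=q(i+1)-1$ or $r(i)=r(i+1)+1$. -/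
/-- Number of `x`-vertices of a subset of `{x_1,…,x_n} ∪ {y_1,…,y_m}`. -/
def xcard {n m : ℕ} (F : Finset (Fin n ⊕ Fin m)) : ℕ :=
  (F.filter fun v => v.isLeft).card

/-- Number of `y`-vertices of a subset of `{x_1,…,x_n} ∪ {y_1,…,y_m}`. -/
def ycard {n m : ℕ} (F : Finset (Fin n ⊕ Fin m)) : ℕ :=
  (F.filter fun v => v.isRight).card

/-- Faces of the complex `Δ` whose facets are the sets with exactly `q(k)`
`x`-vertices and `r(k)` `y`-vertices for some `k = 1,…,s'`. -/
def IsFaceOf (n m s' : ℕ) (qv rv : ℕ → ℕ) (F : Finset (Fin n ⊕ Fin m)) : Prop :=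
  ∃ k, 1 ≤ k ∧ k ≤ s' ∧ xcard F ≤ qv k ∧ ycard F ≤ rv k

/-- The facets of the pure skeleton complex `Δ^{[l-1]}`: the faces of `Δ` of
dimension exactly `l - 1`, i.e. of cardinality `l`. -/
def skelFacets (n m s' : ℕ) (qv rv : ℕ → ℕ) (l : ℕ) : Set (Finset (Fin n ⊕ Fin m)) :=
  {F | IsFaceOf n m s' qv rv F ∧ F.card = l}

/-- Strong connectedness of a pure set of facets (all of cardinality `l`):
every two facets are joined by a chain of facets in which consecutive facets
meet in a set of cardinality `l - 1`. -/
def StronglyConnected {n m : ℕ} (Fac : Set (Finset (Fin n ⊕ Fin m))) : Prop :=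
  ∀ F ∈ Fac, ∀ G ∈ Fac, ∃ (t : ℕ) (c : ℕ → Finset (Fin n ⊕ Fin m)),
    c 0 = F ∧ c t = G ∧ (∀ i ≤ t, c i ∈ Fac) ∧
    ∀ i < t, (c i ∩ c (i + 1)).card + 1 = (c i).card


/-!
Suppose `q(i+1) ≥ q(i) + 2` and `r(i) ≥ r(i+1) + 2`, and put `l = q(i) + r(i+1) + 2`.
A face of `Δ` of cardinality `l` lies in a facet of some `ℱ_k`: if `k ≤ i` it has at most
`q(i)` `x`-vertices, and if `k > i` it has at most `r(i+1)` `y`-vertices, hence at least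
`q(i) + 2` `x`-vertices. So no facet of `Δ^{[l-1]}` has exactly `q(i) + 1` `x`-vertices,
while along a chain of adjacent facets the number of `x`-vertices grows by at most one per
step. This separates the facet with `q(i)` `x`- and `r(i+1) + 2` `y`-vertices (a face of
`ℱ_i`) from the one with `q(i) + 2` `x`- and `r(i+1)` `y`-vertices (a face of `ℱ_{i+1}`).
-/

open Finset

theorem Nat.le_of_forall_succ_le_add_one_of_forall_ne {f : ℕ → ℕ} {a t : ℕ} (h0 : f 0 ≤ a)
    (hstep : ∀ j < t, f (j + 1) ≤ f j + 1) (havoid : ∀ j ≤ t, f j ≠ a + 1) : f t ≤ a := by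
  induction t with
  | zero => exact h0
  | succ t ih =>
    have hft := ih (fun j hj => hstep j (by omega)) (fun j hj => havoid j (by omega))
    have := hstep t (Nat.lt_add_one t)
    have := havoid (t + 1) le_rfl
    omega

section Counting

variable {n m : ℕ}

lemma xcard_eq_card_toLeft (F : Finset (Fin n ⊕ Fin m)) : xcard F = #F.toLeft := by
  have : F.filter (·.isLeft) = F.toLeft.map ⟨Sum.inl, Sum.inl_injective⟩ := by
    ext (x | x) <;> simp
  rw [xcard, this, card_map]

lemma ycard_eq_card_toRight (F : Finset (Fin n ⊕ Fin m)) : ycard F = #F.toRight := by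
  have : F.filter (·.isRight) = F.toRight.map ⟨Sum.inr, Sum.inr_injective⟩ := by
    ext (x | x) <;> simp
  rw [ycard, this, card_map]

lemma xcard_add_ycard (F : Finset (Fin n ⊕ Fin m)) : xcard F + ycard F = #F := by
  rw [xcard_eq_card_toLeft, ycard_eq_card_toRight, card_toLeft_add_card_toRight]

lemma xcard_le_xcard_add_card_sdiff (S T : Finset (Fin n ⊕ Fin m)) :
    xcard T ≤ xcard S + #(T \ S) := by
  have hsub : T.filter (·.isLeft) ⊆ S.filter (·.isLeft) ∪ T \ S := by
    intro v hv
    by_cases hvS : v ∈ S <;> simp_all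
  exact (card_le_card hsub).trans (card_union_le _ _)

end Counting

theorem StronglyConnected.xcard_le_of_forall_xcard_ne {n m l a : ℕ}
    {Fac : Set (Finset (Fin n ⊕ Fin m))} (hFac : StronglyConnected Fac)
    (hpure : ∀ F ∈ Fac, #F = l) (havoid : ∀ F ∈ Fac, xcard F ≠ a + 1)
    {F G : Finset (Fin n ⊕ Fin m)} (hF : F ∈ Fac) (hG : G ∈ Fac) (hFa : xcard F ≤ a) :
    xcard G ≤ a := by
  obtain ⟨t, c, rfl, rfl, hmem, hadj⟩ := hFac F hF G hG
  refine Nat.le_of_forall_succ_le_add_one_of_forall_ne hFa (fun j hj => ?_)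
    (fun j hj => havoid _ (hmem j hj))
  have hsdiff : #(c (j + 1) \ c j) = 1 := by
    have := hadj j hj
    rw [card_sdiff, hpure _ (hmem (j + 1) hj), ← hpure _ (hmem j hj.le)]
    omega
  simpa [hsdiff] using xcard_le_xcard_add_card_sdiff (c j) (c (j + 1))

section Skeleton

variable {n m s' : ℕ} {qv rv : ℕ → ℕ}

lemma xcard_ne_of_mem_skelFacets (hq : MonotoneOn qv (Set.Icc 1 s'))
    (hr : AntitoneOn rv (Set.Icc 1 s')) {i : ℕ} (hi : 1 ≤ i) (his : i < s')
    {F : Finset (Fin n ⊕ Fin m)} (hF : F ∈ skelFacets n m s' qv rv (qv i + rv (i + 1) + 2)) :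
    xcard F ≠ qv i + 1 := by
  obtain ⟨⟨k, hk, hks, hxk, hyk⟩, hcard⟩ := hF
  have hsum := xcard_add_ycard F
  rcases le_or_gt k i with hki | hki
  · have := hq ⟨hk, hks⟩ ⟨hi, his.le⟩ hki
    omega
  · have : rv k ≤ rv (i + 1) := hr ⟨by omega, his⟩ ⟨hk, hks⟩ hki
    omega

lemma exists_mem_skelFacets_xcard_eq {k a b l : ℕ} (hk : 1 ≤ k) (hks : k ≤ s')
    (haq : a ≤ qv k) (hbr : b ≤ rv k) (han : a ≤ n) (hbm : b ≤ m) (hl : a + b = l) :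
    ∃ F ∈ skelFacets n m s' qv rv l, xcard F = a := by
  obtain ⟨A, -, hA⟩ := exists_subset_card_eq (s := (univ : Finset (Fin n))) (by simpa using han)
  obtain ⟨B, -, hB⟩ := exists_subset_card_eq (s := (univ : Finset (Fin m))) (by simpa using hbm)
  have hx : xcard (A.disjSum B) = a := by rw [xcard_eq_card_toLeft, toLeft_disjSum, hA]
  have hy : ycard (A.disjSum B) = b := by rw [ycard_eq_card_toRight, toRight_disjSum, hB]
  exact ⟨A.disjSum B, ⟨⟨k, hk, hks, hx.le.trans haq, hy.le.trans hbr⟩,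
    by rw [← xcard_add_ycard, hx, hy, hl]⟩, hx⟩

end Skeleton

theorem step_of_skeleta_stronglyConnected_general (n m s' : ℕ)
    (qv rv : ℕ → ℕ)
    (hq : ∀ i j, 1 ≤ i → i < j → j ≤ s' → qv i < qv j)
    (hr : ∀ i j, 1 ≤ i → i < j → j ≤ s' → rv j < rv i)
    (hqn : qv s' ≤ n) (hrm : rv 1 ≤ m)
    (hconn : ∀ l, l ≤ (Finset.Icc 1 s').sup (fun k => qv k + rv k) →
      StronglyConnected (skelFacets n m s' qv rv l)) :
    ∀ i, 1 ≤ i → i < s' → qv (i + 1) = qv i + 1 ∨ rv i = rv (i + 1) + 1 := by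
  intro i hi his
  have hqmono : MonotoneOn qv (Set.Icc 1 s') :=
    StrictMonoOn.monotoneOn fun a ha b hb hab => hq a b ha.1 hab hb.2
  have hranti : AntitoneOn rv (Set.Icc 1 s') :=
    StrictAntiOn.antitoneOn fun a ha b hb hab => hr a b ha.1 hab hb.2
  have hqi := hq i (i + 1) hi (Nat.lt_add_one i) his
  have hri := hr i (i + 1) hi (Nat.lt_add_one i) his
  by_contra! ⟨hqgap, hrgap⟩
  have hqn' : qv (i + 1) ≤ n := (hqmono ⟨by omega, his⟩ ⟨by omega, le_rfl⟩ his).trans hqn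
  have hrm' : rv i ≤ m := (hranti ⟨le_rfl, by omega⟩ ⟨hi, his.le⟩ hi).trans hrm
  set l := qv i + rv (i + 1) + 2
  obtain ⟨F, hF, hxF⟩ : ∃ F ∈ skelFacets n m s' qv rv l, xcard F = qv i :=
    exists_mem_skelFacets_xcard_eq (k := i) (b := rv (i + 1) + 2) hi his.le le_rfl
      (by omega) (by omega) (by omega) (by omega)
  obtain ⟨G, hG, hxG⟩ : ∃ G ∈ skelFacets n m s' qv rv l, xcard G = qv i + 2 :=
    exists_mem_skelFacets_xcard_eq (k := i + 1) (b := rv (i + 1)) (by omega) his (by omega)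
      le_rfl (by omega) (by omega) (by omega)
  have hl : l ≤ (Icc 1 s').sup fun k => qv k + rv k :=
    (le_sup (f := fun k => qv k + rv k) (mem_Icc.mpr ⟨hi, his.le⟩)).trans' (by omega)
  have := (hconn _ hl).xcard_le_of_forall_xcard_ne (fun H hH => hH.2)
    (fun H hH => xcard_ne_of_mem_skelFacets hqmono hranti hi his hH) hF hG hxF.le
  omega

/-- (Lemma 4.5(1).)  If `Δ^{[l-1]}` is strongly connected for every
`0 ≤ l ≤ dim Δ + 1` (note `dim Δ + 1 = max_k (q(k) + r(k))`), then for all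
`i = 1,…,s'-1` either `q(i) = q(i+1) - 1` or `r(i) = r(i+1) + 1`. -/
theorem step_of_skeleta_stronglyConnected (n m s' : ℕ) (hs' : 1 ≤ s')
    (qv rv : ℕ → ℕ)
    (hq : ∀ i j, 1 ≤ i → i < j → j ≤ s' → qv i < qv j)
    (hr : ∀ i j, 1 ≤ i → i < j → j ≤ s' → rv j < rv i)
    (hqn : qv s' ≤ n) (hrm : rv 1 ≤ m)
    (hconn : ∀ l, l ≤ (Finset.Icc 1 s').sup (fun k => qv k + rv k) →
      StronglyConnected (skelFacets n m s' qv rv l)) :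
    ∀ i, 1 ≤ i → i < s' → qv (i + 1) = qv i + 1 ∨ rv i = rv (i + 1) + 1 :=
  step_of_skeleta_stronglyConnected_general n m s' qv rv hq hr hqn hrm hconn
end
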